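/- arXiv:2007.11904 — 2 statements merged into one kernel-verified Lean document; each statement's English description precedes it below -/
import Mathlib

section
/- Let C ⊆ ℝ be a fat Cantor set (compact, totally disconnected, with positive Lebesgue measure) and μ := ℒ¹|_C. Then W^{1,2}(ℝ,μ) = L²(μ) and |D_μ f| = 0 μ-a.e. for every f ∈ W^{1,2}(ℝ,μ); equivalently, the tangent distribution satisfies T_μ(x) = {0} for μ-a.e. x, while the Alberti–Marchese distribution satisfies V_μ(x) = ℝ for μ-a.e. x. -/
open MeasureTheory Filter Metric Set Topology
open scoped NNReal ENNReal

noncomputable section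

instance curveMS (X : Type*) [MetricSpace X] : MeasurableSpace C(unitInterval, X) := borel _
instance curveBS (X : Type*) [MetricSpace X] : BorelSpace C(unitInterval, X) := ⟨rfl⟩

/-- `g` is an (integrable-type) speed bound for the curve `γ`, i.e.
`dist (γ s) (γ t) ≤ ∫_s^t g`. -/
def speedBound {X : Type*} [MetricSpace X] (γ : C(unitInterval, X)) (g : ℝ → ℝ) : Prop :=
  ∀ s t : unitInterval, s ≤ t →
    dist (γ s) (γ t) ≤ ∫ r in Set.Ioc (s : ℝ) (t : ℝ), g r

/-- `π` is a test plan on `(X, d, μ)` with (jointly measurable) speed bound `g`: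
`π` is a probability measure with bounded compression, concentrated on `AC²` curves,
with finite kinetic energy (witnessed by `g`). -/
def IsTestPlanWith {X : Type*} [MetricSpace X] [MeasurableSpace X]
    (μ : Measure X) (π : Measure C(unitInterval, X))
    (g : C(unitInterval, X) → ℝ → ℝ) : Prop :=
  IsProbabilityMeasure π ∧
  (∃ C : ℝ≥0, 0 < C ∧ ∀ t : unitInterval,
      Measure.map (fun γ : C(unitInterval, X) => γ t) π ≤ (C : ℝ≥0∞) • μ) ∧
  (∀ γ r, 0 ≤ g γ r) ∧
  Measurable (Function.uncurry g) ∧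
  (∀ᵐ γ ∂π, speedBound γ (g γ)) ∧
  (∫⁻ γ, (∫⁻ r in Set.Icc (0:ℝ) 1, ENNReal.ofReal ((g γ r) ^ 2)) ∂π) < ⊤

/-- `π` is a test plan on `(X, d, μ)`. -/
def IsTestPlan {X : Type*} [MetricSpace X] [MeasurableSpace X]
    (μ : Measure X) (π : Measure C(unitInterval, X)) : Prop :=
  ∃ g, IsTestPlanWith μ π g

/-- Value of a curve at a real time `t ∈ [0,1]`. -/
def curveAt {X : Type*} [MetricSpace X] (γ : C(unitInterval, X)) (t : ℝ) : X :=
  γ (Set.projIcc (0:ℝ) 1 zero_le_one t)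

/-- `G` is a weak upper gradient of `f`: along every test plan, the variation of `f`
between the endpoints is controlled by `∫ G(γ_t)|γ̇_t| dt`. -/
def IsWeakUpperGradient {X : Type*} [MetricSpace X] [MeasurableSpace X]
    (μ : Measure X) (f G : X → ℝ) : Prop :=
  ∀ (π : Measure C(unitInterval, X)) (g : C(unitInterval, X) → ℝ → ℝ),
    IsTestPlanWith μ π g →
    ∀ᵐ γ ∂π, |f (γ 1) - f (γ 0)| ≤ ∫ t in Set.Icc (0:ℝ) 1, G (curveAt γ t) * g γ t

/-- The Sobolev space `W^{1,2}(X, μ)` defined via test plans. -/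
def MemW12 {X : Type*} [MetricSpace X] [MeasurableSpace X]
    (μ : Measure X) (f : X → ℝ) : Prop :=
  MemLp f 2 μ ∧ ∃ G : X → ℝ, MemLp G 2 μ ∧ (∀ᵐ x ∂μ, 0 ≤ G x) ∧ IsWeakUpperGradient μ f G

/-- `G` is the minimal weak upper gradient `|D_μ f|` of `f`. -/
def IsMinimalWUG {X : Type*} [MetricSpace X] [MeasurableSpace X]
    (μ : Measure X) (f G : X → ℝ) : Prop :=
  MemLp G 2 μ ∧ (∀ᵐ x ∂μ, 0 ≤ G x) ∧ IsWeakUpperGradient μ f G ∧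
  ∀ H : X → ℝ, MemLp H 2 μ → (∀ᵐ x ∂μ, 0 ≤ H x) → IsWeakUpperGradient μ f H →
    ∀ᵐ x ∂μ, G x ≤ H x

end

open scoped RealInnerProductSpace
noncomputable section

/-- A distribution on the Euclidean space `E`: a Borel assignment of a linear subspace to
each point (Borel measurability expressed via the distance functions to the fibers). -/
def IsBorelDistribution {E : Type*} [NormedAddCommGroup E] [InnerProductSpace ℝ E]
    [MeasurableSpace E] (V : E → Submodule ℝ E) : Prop :=
  ∀ w : E, Measurable fun x : E => Metric.infDist w ((V x : Set E))

/-- The extension of a curve `γ : [0,1] → E` to `ℝ` by projection onto `[0,1]`. -/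
def curveExt {E : Type*} [MetricSpace E] (γ : C(unitInterval, E)) (t : ℝ) : E :=
  γ (Set.projIcc (0:ℝ) 1 zero_le_one t)

/-- The distribution `V` contains the velocities of all test plans: for every test plan
`π` and `π`-a.e. curve `γ`, `γ̇_t ∈ V(γ_t)` for a.e. `t ∈ [0,1]`. -/
def VelocityTangent {E : Type*} [NormedAddCommGroup E] [InnerProductSpace ℝ E]
    [MeasurableSpace E] (μ : Measure E) (V : E → Submodule ℝ E) : Prop :=
  ∀ (π : Measure C(unitInterval, E)) g, IsTestPlanWith μ π g →
    ∀ᵐ γ ∂π, ∀ᵐ t ∂(volume.restrict (Set.Icc (0:ℝ) 1)),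
      ∀ d : E, HasDerivAt (curveExt γ) d t → d ∈ V (curveExt γ t)

/-- `T` is the tangent distribution `T_μ`: the minimal Borel distribution containing the
velocities of all test plans. -/
def IsTangentDistribution {E : Type*} [NormedAddCommGroup E] [InnerProductSpace ℝ E]
    [MeasurableSpace E] (μ : Measure E) (T : E → Submodule ℝ E) : Prop :=
  IsBorelDistribution T ∧ VelocityTangent μ T ∧
  ∀ V : E → Submodule ℝ E, IsBorelDistribution V → VelocityTangent μ V →
    ∀ᵐ x ∂μ, T x ≤ V x

/-- Every compactly supported Lipschitz function is `μ`-a.e. differentiable along `V`. -/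
def AMDifferentiable {E : Type*} [NormedAddCommGroup E] [InnerProductSpace ℝ E]
    [MeasurableSpace E] (μ : Measure E) (V : E → Submodule ℝ E) : Prop :=
  ∀ f : E → ℝ, (∃ K, LipschitzWith K f) → HasCompactSupport f →
    ∃ gf : E → E, (∀ᵐ x ∂μ, gf x ∈ V x) ∧
      ∀ᵐ x ∂μ, Filter.Tendsto (fun v : E => (f (x + v) - f x - ⟪gf x, v⟫) / ‖v‖)
        (nhdsWithin 0 (((V x : Set E)) \ {0})) (nhds 0)

/-- `V` is the Alberti–Marchese distribution `V_μ`: the maximal Borel distribution along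
which every compactly supported Lipschitz function is `μ`-a.e. differentiable. -/
def IsAMDistribution {E : Type*} [NormedAddCommGroup E] [InnerProductSpace ℝ E]
    [MeasurableSpace E] (μ : Measure E) (V : E → Submodule ℝ E) : Prop :=
  IsBorelDistribution V ∧ AMDifferentiable μ V ∧
  ∀ W : E → Submodule ℝ E, IsBorelDistribution W → AMDifferentiable μ W →
    ∀ᵐ x ∂μ, W x ≤ V x

/-
The support `C` of `μ` is closed and totally disconnected. A test plan has bounded compression,
so at each of countably many dense times `π`-a.e. curve lies in `C`, hence by continuity at all
times; a connected subset of `C` being a point, every test plan is concentrated on constant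
curves. So `0` is a weak upper gradient of every function (making `W^{1,2}` all of `L²` with
`|D_μ f| = 0`), and the zero distribution already contains all test plan velocities. On the other
hand `μ ≪ ℒ¹`, so by Rademacher's theorem every Lipschitz function is `μ`-a.e. differentiable in
every direction and `V_μ` is the whole line.
-/

def TestPlansConstant {X : Type*} [MetricSpace X] [MeasurableSpace X] (μ : Measure X) : Prop :=
  ∀ (π : Measure C(unitInterval, X)) (g : C(unitInterval, X) → ℝ → ℝ),
    IsTestPlanWith μ π g → ∀ᵐ γ ∂π, ∀ s : unitInterval, γ s = γ 0

namespace IsTestPlanWith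

variable {X : Type*} [MetricSpace X] [MeasurableSpace X] [BorelSpace X] {μ : Measure X}
  {π : Measure C(unitInterval, X)} {g : C(unitInterval, X) → ℝ → ℝ} {C : Set X}

lemma ae_eval_mem (h : IsTestPlanWith μ π g) (hC : MeasurableSet C) (hμC : ∀ᵐ x ∂μ, x ∈ C)
    (t : unitInterval) : ∀ᵐ γ ∂π, γ t ∈ C := by
  obtain ⟨-, ⟨K, -, hmap⟩, -⟩ := h
  have heval : Measurable fun γ : C(unitInterval, X) => γ t :=
    (continuous_eval_const t).measurable
  have hμCc : μ Cᶜ = 0 := hμC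
  have hle := Measure.le_iff'.1 (hmap t) Cᶜ
  rw [Measure.map_apply heval hC.compl, Measure.smul_apply, hμCc, smul_zero,
    nonpos_iff_eq_zero] at hle
  exact hle

lemma ae_range_subset (h : IsTestPlanWith μ π g) (hC : IsClosed C) (hμC : ∀ᵐ x ∂μ, x ∈ C) :
    ∀ᵐ (γ : C(unitInterval, X)) ∂π, range γ ⊆ C := by
  obtain ⟨D, hDc, hDd⟩ := TopologicalSpace.exists_countable_dense unitInterval
  have hD : ∀ᵐ γ ∂π, ∀ t ∈ D, γ t ∈ C :=
    (ae_ball_iff hDc).2 fun t _ => h.ae_eval_mem hC.measurableSet hμC t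
  filter_upwards [hD] with γ hγ
  calc range γ ⊆ closure (γ '' D) := γ.continuous.range_subset_closure_image_dense hDd
    _ ⊆ C := closure_minimal (image_subset_iff.2 hγ) hC

end IsTestPlanWith

lemma testPlansConstant_of_isTotallyDisconnected {X : Type*} [MetricSpace X] [MeasurableSpace X]
    [BorelSpace X] {μ : Measure X} {C : Set X} (hC : IsClosed C) (hTD : IsTotallyDisconnected C)
    (hμC : ∀ᵐ x ∂μ, x ∈ C) : TestPlansConstant μ := fun _ _ h => by
  filter_upwards [IsTestPlanWith.ae_range_subset h hC hμC] with γ hγ s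
  exact hTD _ hγ (isPreconnected_range γ.continuous) (mem_range_self s) (mem_range_self 0)

namespace TestPlansConstant

section Sobolev

variable {X : Type*} [MetricSpace X] [MeasurableSpace X] {μ : Measure X}

lemma isWeakUpperGradient_zero (h : TestPlansConstant μ) (f : X → ℝ) :
    IsWeakUpperGradient μ f fun _ => 0 := fun π g hπ => by
  filter_upwards [h π g hπ] with γ hγ
  simp [hγ 1]

lemma isMinimalWUG_zero (h : TestPlansConstant μ) (f : X → ℝ) :
    IsMinimalWUG μ f fun _ => 0 :=
  ⟨MemLp.zero, .of_forall fun _ => le_rfl, h.isWeakUpperGradient_zero f, fun _ _ hH _ => hH⟩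

lemma memW12 (h : TestPlansConstant μ) {f : X → ℝ} (hf : MemLp f 2 μ) : MemW12 μ f :=
  ⟨hf, fun _ => 0, MemLp.zero, .of_forall fun _ => le_rfl, h.isWeakUpperGradient_zero f⟩

end Sobolev

variable {E : Type*} [NormedAddCommGroup E] [InnerProductSpace ℝ E] [MeasurableSpace E]
  {μ : Measure E}

lemma velocityTangent_bot (h : TestPlansConstant μ) : VelocityTangent μ fun _ => ⊥ :=
  fun π g hπ => by
  filter_upwards [h π g hπ] with γ hγ
  refine .of_forall fun t d hd => ?_
  have hconst : curveExt γ = fun _ => γ 0 := funext fun _ => hγ _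
  rw [hconst] at hd
  exact (Submodule.mem_bot ℝ).2 (hd.unique (hasDerivAt_const t (γ 0)))

lemma ae_eq_bot_of_isTangentDistribution (h : TestPlansConstant μ) {T : E → Submodule ℝ E}
    (hT : IsTangentDistribution μ T) : ∀ᵐ x ∂μ, T x = ⊥ := by
  filter_upwards [hT.2.2 _ (fun _ => measurable_const) h.velocityTangent_bot] with x hx
  exact le_bot_iff.1 hx

end TestPlansConstant

section AlbertiMarchese

variable {E : Type*} [NormedAddCommGroup E] [InnerProductSpace ℝ E]

lemma HasGradientAt.tendsto_div_norm [CompleteSpace E] {f : E → ℝ} {f' x : E}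
    (h : HasGradientAt f f' x) :
    Tendsto (fun v => (f (x + v) - f x - ⟪f', v⟫) / ‖v‖) (𝓝 0) (𝓝 0) :=
  (Asymptotics.isLittleO_norm_right.2
    (hasGradientAt_iff_isLittleO_nhds_zero.1 h)).tendsto_div_nhds_zero

variable [FiniteDimensional ℝ E] [MeasurableSpace E] [BorelSpace E]

lemma amDifferentiable_top_of_absolutelyContinuous {μ ν : Measure E} [ν.IsAddHaarMeasure]
    (hμν : μ ≪ ν) : AMDifferentiable μ fun _ => ⊤ := by
  rintro f ⟨K, hK⟩ -
  refine ⟨gradient f, .of_forall fun _ => Submodule.mem_top, ?_⟩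
  filter_upwards [hμν.ae_le hK.ae_differentiableAt] with x hx
  exact hx.hasGradientAt.tendsto_div_norm.mono_left nhdsWithin_le_nhds

lemma IsAMDistribution.ae_eq_top_of_absolutelyContinuous {μ ν : Measure E}
    [ν.IsAddHaarMeasure] (hμν : μ ≪ ν) {V : E → Submodule ℝ E} (hV : IsAMDistribution μ V) :
    ∀ᵐ x ∂μ, V x = ⊤ := by
  filter_upwards [hV.2.2 _ (fun _ => measurable_const)
    (amDifferentiable_top_of_absolutelyContinuous hμν)] with x hx
  exact top_unique hx

end AlbertiMarchese

theorem stmt12_general (C : Set ℝ) (hC : IsCompact C) (hTD : IsTotallyDisconnected C) :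
    (∀ f : ℝ → ℝ, MemLp f 2 (MeasureTheory.volume.restrict C) →
      MemW12 (MeasureTheory.volume.restrict C) f ∧
      IsMinimalWUG (MeasureTheory.volume.restrict C) f (fun _ => 0)) ∧
    (∀ T : ℝ → Submodule ℝ ℝ, IsTangentDistribution (MeasureTheory.volume.restrict C) T →
      ∀ᵐ x ∂(MeasureTheory.volume.restrict C), T x = ⊥) ∧
    (∀ V : ℝ → Submodule ℝ ℝ, IsAMDistribution (MeasureTheory.volume.restrict C) V →
      ∀ᵐ x ∂(MeasureTheory.volume.restrict C), V x = ⊤) := by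
  have hconst : TestPlansConstant (volume.restrict C) :=
    testPlansConstant_of_isTotallyDisconnected hC.isClosed hTD
      (ae_restrict_mem hC.measurableSet)
  refine ⟨fun f hf => ⟨hconst.memW12 hf, hconst.isMinimalWUG_zero f⟩,
    fun _ => hconst.ae_eq_bot_of_isTangentDistribution,
    fun _ => IsAMDistribution.ae_eq_top_of_absolutelyContinuous
      Measure.restrict_le_self.absolutelyContinuous⟩

/-- for a fat Cantor set `C ⊆ ℝ` and `μ := ℒ¹|_C`, the Sobolev space
`W^{1,2}(ℝ,μ)` is all of `L²(μ)` with vanishing minimal weak upper gradients;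
equivalently the tangent distribution is trivial `μ`-a.e., while the Alberti–Marchese
distribution is all of `ℝ` `μ`-a.e. -/
theorem stmt12 (C : Set ℝ) (hC : IsCompact C) (hTD : IsTotallyDisconnected C)
    (hpos : 0 < MeasureTheory.volume C) :
    (∀ f : ℝ → ℝ, MemLp f 2 (MeasureTheory.volume.restrict C) →
      MemW12 (MeasureTheory.volume.restrict C) f ∧
      IsMinimalWUG (MeasureTheory.volume.restrict C) f (fun _ => 0)) ∧
    (∀ T : ℝ → Submodule ℝ ℝ, IsTangentDistribution (MeasureTheory.volume.restrict C) T →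
      ∀ᵐ x ∂(MeasureTheory.volume.restrict C), T x = ⊥) ∧
    (∀ V : ℝ → Submodule ℝ ℝ, IsAMDistribution (MeasureTheory.volume.restrict C) V →
      ∀ᵐ x ∂(MeasureTheory.volume.restrict C), V x = ⊤) :=
  stmt12_general C hC hTD

end
end

section
/- Let μ be a Radon measure on ℝⁿ and π a test plan on (ℝⁿ,d_Eucl,μ). Then for every v ∈ L²(ℝⁿ,ℝⁿ;μ) the map t ↦ v ∘ e_t, from [0,1] into L²(C([0,1],ℝⁿ),ℝⁿ;π), is continuous. -/
open MeasureTheory Filter Metric Set Topology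
open scoped NNReal ENNReal

/-!
Under a test plan the evaluation maps `e_s` have uniformly bounded compression, so composition
with `e_s` is bounded from `Lᵖ(μ)` to `Lᵖ(π)` uniformly in `s`. For a bounded continuous `w`,
`s ↦ w ∘ e_s` is continuous in `Lᵖ(π)` by bounded convergence, since every curve is continuous.
Bounded continuous functions are dense in `Lᵖ(μ)` for a weakly regular `μ`, and an `ε/3`
argument transfers the continuity to every `v ∈ Lᵖ(μ)`.
-/

open scoped BoundedContinuousFunction

namespace MeasureTheory

variable {Ω X E : Type*} [MeasurableSpace Ω] [NormedAddCommGroup E] {π : Measure Ω}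
  {p : ℝ≥0∞}

theorem integral_norm_sq_eq_toReal_eLpNorm_sq {f : Ω → E} (hf : AEStronglyMeasurable f π) :
    ∫ ω, ‖f ω‖ ^ 2 ∂π = (eLpNorm f 2 π).toReal ^ 2 := by
  have hI : 0 ≤ ∫ ω, ‖f ω‖ ^ (2 : ℝ) ∂π := integral_nonneg fun _ => by positivity
  rw [toReal_eLpNorm hf, show (2 : ℝ≥0∞) = ((2 : ℝ≥0) : ℝ≥0∞) from rfl,
    lpNorm_nnreal_eq_integral_norm_rpow two_ne_zero hf]
  simpa using (Real.rpow_inv_natCast_pow hI two_ne_zero).symm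

theorem tendsto_eLpNorm_zero_of_norm_le {ι : Type*} {l : Filter ι} [l.IsCountablyGenerated]
    [IsFiniteMeasure π] (hp : p ≠ ∞) {F : ι → Ω → E}
    (hF : ∀ᶠ i in l, AEStronglyMeasurable (F i) π) (M : ℝ)
    (hbound : ∀ᶠ i in l, ∀ᵐ ω ∂π, ‖F i ω‖ ≤ M)
    (hlim : ∀ᵐ ω ∂π, Tendsto (fun i => F i ω) l (𝓝 0)) :
    Tendsto (fun i => eLpNorm (F i) p π) l (𝓝 0) := by
  rcases eq_or_ne p 0 with rfl | hp0
  · simpa using tendsto_const_nhds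
  have hp_pos : 0 < p.toReal := ENNReal.toReal_pos hp0 hp
  simp_rw [eLpNorm_eq_lintegral_rpow_enorm_toReal hp0 hp]
  refine ENNReal.zero_rpow_of_pos (by positivity : 0 < 1 / p.toReal) ▸ Tendsto.ennrpow_const _ ?_
  refine lintegral_zero (μ := π) ▸ tendsto_lintegral_filter_of_dominated_convergence'
    (f := fun _ => 0) (fun _ => ENNReal.ofReal M ^ p.toReal)
    (hF.mono fun i hi => hi.enorm.pow_const _)
    (hbound.mono fun i hi => hi.mono fun ω hω =>
      ENNReal.rpow_le_rpow (ofReal_norm (F i ω) ▸ ENNReal.ofReal_le_ofReal hω) hp_pos.le)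
    (by simp [lintegral_const, ENNReal.mul_eq_top, ENNReal.rpow_eq_top_iff, hp_pos])
    (hlim.mono fun ω hω => ENNReal.zero_rpow_of_pos hp_pos ▸
      (enorm_zero (E := E) ▸ hω.enorm).ennrpow_const _)

theorem AEStronglyMeasurable.comp_of_map_le_smul [MeasurableSpace X] {μ : Measure X}
    {e : Ω → X} (he : AEMeasurable e π) {C : ℝ≥0∞} (hmap : π.map e ≤ C • μ) {f : X → E}
    (hf : AEStronglyMeasurable f μ) : AEStronglyMeasurable (f ∘ e) π :=
  (hf.mono_ac (Measure.absolutelyContinuous_of_le_smul hmap)).comp_aemeasurable he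

theorem eLpNorm_comp_le_of_map_le_smul [MeasurableSpace X] {μ : Measure X} {e : Ω → X}
    (he : AEMeasurable e π) {C : ℝ≥0∞} (hmap : π.map e ≤ C • μ) {f : X → E}
    (hf : AEStronglyMeasurable f μ) :
    eLpNorm (f ∘ e) p π ≤ C ^ (1 / p).toReal * eLpNorm f p μ := by
  rw [← eLpNorm_map_measure (hf.mono_ac (Measure.absolutelyContinuous_of_le_smul hmap)) he]
  exact eLpNorm_le_of_measure_le_smul hmap

section Evaluation

variable {T : Type*} [TopologicalSpace T] [FirstCountableTopology T] [TopologicalSpace X]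
  [IsFiniteMeasure π] {e : T → Ω → X}

theorem tendsto_eLpNorm_comp_sub_of_boundedContinuous (he_cont : ∀ ω, Continuous fun s => e s ω)
    (hp : p ≠ ∞) (w : X →ᵇ E) (hw : ∀ s, AEStronglyMeasurable (w ∘ e s) π) (t : T) :
    Tendsto (fun s => eLpNorm (w ∘ e s - w ∘ e t) p π) (𝓝 t) (𝓝 0) :=
  tendsto_eLpNorm_zero_of_norm_le hp (.of_forall fun s => (hw s).sub (hw t)) (2 * ‖w‖)
    (.of_forall fun s => ae_of_all _ fun ω => (norm_sub_le _ _).trans <|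
      (add_le_add (w.norm_coe_le_norm _) (w.norm_coe_le_norm _)).trans_eq (two_mul _).symm)
    (ae_of_all _ fun ω => by
      simpa using ((w.continuous.comp (he_cont ω)).tendsto t).sub_const (w (e t ω)))

variable [MeasurableSpace X] {μ : Measure X}

theorem tendsto_eLpNorm_comp_sub_of_map_le_smul [NormalSpace X] [BorelSpace X]
    [μ.WeaklyRegular] [NormedSpace ℝ E] (he : ∀ s, AEMeasurable (e s) π)
    (he_cont : ∀ ω, Continuous fun s => e s ω) {C : ℝ≥0∞} (hC : C ≠ ∞)
    (hmap : ∀ s, π.map (e s) ≤ C • μ) (hp₁ : 1 ≤ p) (hp : p ≠ ∞) {v : X → E}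
    (hv : MemLp v p μ) (t : T) :
    Tendsto (fun s => eLpNorm (v ∘ e s - v ∘ e t) p π) (𝓝 t) (𝓝 0) := by
  have hcomp {f : X → E} (hf : AEStronglyMeasurable f μ) (s : T) :
      AEStronglyMeasurable (f ∘ e s) π :=
    hf.comp_of_map_le_smul (he s) (hmap s)
  rw [ENNReal.tendsto_nhds_zero]
  intro ε hε
  have hε3 : 0 < ε / 3 := ENNReal.div_pos hε.ne' (by norm_num)
  have hK : C ^ (1 / p).toReal ≠ ∞ := ENNReal.rpow_ne_top_of_nonneg (by positivity) hC
  obtain ⟨w, hvw, hw⟩ := hv.exists_boundedContinuous_eLpNorm_sub_le hp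
    (ENNReal.div_pos hε3.ne' hK).ne'
  have hclose (s : T) : eLpNorm ((v - ⇑w) ∘ e s) p π ≤ ε / 3 :=
    (eLpNorm_comp_le_of_map_le_smul (he s) (hmap s) (hv.1.sub hw.1)).trans <|
      (mul_le_mul_of_nonneg_left hvw zero_le).trans ENNReal.mul_div_le
  filter_upwards [ENNReal.tendsto_nhds_zero.1 (tendsto_eLpNorm_comp_sub_of_boundedContinuous
    he_cont hp w (hcomp hw.1) t) _ hε3] with s hs
  have hsplit : v ∘ e s - v ∘ e t = (v - ⇑w) ∘ e s + (w ∘ e s - w ∘ e t) - (v - ⇑w) ∘ e t := by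
    ext ω
    simp only [Pi.sub_apply, Pi.add_apply, Function.comp_apply]
    abel
  have hvw_meas := hcomp (hv.1.sub hw.1)
  have hw_meas := (hcomp hw.1 s).sub (hcomp hw.1 t)
  calc eLpNorm (v ∘ e s - v ∘ e t) p π
      ≤ eLpNorm ((v - ⇑w) ∘ e s) p π + eLpNorm (w ∘ e s - w ∘ e t) p π
          + eLpNorm ((v - ⇑w) ∘ e t) p π := by
        rw [hsplit]
        exact (eLpNorm_sub_le ((hvw_meas s).add hw_meas) (hvw_meas t) hp₁).trans
          (add_le_add (eLpNorm_add_le (hvw_meas s) hw_meas hp₁) le_rfl)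
    _ ≤ ε / 3 + ε / 3 + ε / 3 := by gcongr <;> exact hclose _
    _ = ε := ENNReal.add_thirds ε

end Evaluation

end MeasureTheory

/-- for a Radon measure `μ` on `ℝⁿ`, a test plan `π` and
`v ∈ L²(ℝⁿ,ℝⁿ;μ)`, the map `t ↦ v ∘ e_t` from `[0,1]` to
`L²(C([0,1],ℝⁿ),ℝⁿ;π)` is continuous. -/
theorem stmt15 (n : ℕ) (μ : Measure (EuclideanSpace ℝ (Fin n))) [IsLocallyFiniteMeasure μ]
    (π : Measure C(unitInterval, EuclideanSpace ℝ (Fin n))) (hπ : IsTestPlan μ π)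
    (v : EuclideanSpace ℝ (Fin n) → EuclideanSpace ℝ (Fin n)) (hv : MemLp v 2 μ) :
    ∀ t : unitInterval,
      Filter.Tendsto (fun s : unitInterval => ∫ γ, ‖v (γ s) - v (γ t)‖ ^ 2 ∂π)
        (nhds t) (nhds 0) := by
  obtain ⟨-, hprob, ⟨C, -, hmap⟩, -⟩ := hπ
  intro t
  have heval (s : unitInterval) :
      AEMeasurable (fun γ : C(unitInterval, EuclideanSpace ℝ (Fin n)) => γ s) π :=
    (continuous_eval_const s).measurable.aemeasurable
  have hL2 := tendsto_eLpNorm_comp_sub_of_map_le_smul heval (fun γ => γ.continuous)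
    ENNReal.coe_ne_top hmap one_le_two ENNReal.ofNat_ne_top hv t
  have hmeas (s : unitInterval) := hv.1.comp_of_map_le_smul (heval s) (hmap s)
  convert ((ENNReal.tendsto_toReal ENNReal.zero_ne_top).comp hL2).pow 2 using 1
  · ext s
    exact integral_norm_sq_eq_toReal_eLpNorm_sq ((hmeas s).sub (hmeas t))
  · simp
end
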